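/- For all n ≥ 1, (3^{−β}/20) · n^β < S_{3,0}(n) < 5 · 3^{−β} · n^β, where β = log 3 / log 4. -/
import Mathlib


open Real

/-- Binary digit sum. -/
def binDigitSum (n : ℕ) : ℕ := (Nat.digits 2 n).sum

/-- The ±1 Thue–Morse sequence. -/
def tm (n : ℕ) : ℤ := (-1) ^ (binDigitSum n)

/-- The `p`-rarefied sums of the Thue–Morse sequence. -/
def rarefiedSum (p j n : ℕ) : ℤ :=
  ∑ l ∈ (Finset.range n).filter (fun l => l % p = j), tm l

lemma bds_aux (m b : ℕ) (hb : b < 2) : binDigitSum (2*m+b) = binDigitSum m + b := by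
  rcases Nat.eq_zero_or_pos m with rfl | hm
  · interval_cases b <;> simp [binDigitSum]
  · unfold binDigitSum
    rw [Nat.digits_def' (by norm_num : 1 < 2) (by omega)]
    have h1 : (2*m+b) % 2 = b := by omega
    have h2 : (2*m+b) / 2 = m := by omega
    rw [h1, h2, List.sum_cons]
    omega

lemma tm_two_mul (m : ℕ) : tm (2*m) = tm m := by
  unfold tm
  rw [show 2*m = 2*m+0 by ring, bds_aux m 0 (by norm_num), add_zero]

lemma tm_two_mul_add_one (m : ℕ) : tm (2*m+1) = -tm m := by
  unfold tm
  rw [bds_aux m 1 (by norm_num), pow_succ]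
  ring

lemma tm_4n (n : ℕ) : tm (4*n) = tm n := by
  rw [show 4*n = 2*(2*n) by ring, tm_two_mul, tm_two_mul]

lemma tm_4n1 (n : ℕ) : tm (4*n+1) = -tm n := by
  rw [show 4*n+1 = 2*(2*n)+1 by ring, tm_two_mul_add_one, tm_two_mul]

lemma tm_4n2 (n : ℕ) : tm (4*n+2) = -tm n := by
  rw [show 4*n+2 = 2*(2*n+1) by ring, tm_two_mul, tm_two_mul_add_one]

lemma tm_4n3 (n : ℕ) : tm (4*n+3) = tm n := by
  rw [show 4*n+3 = 2*(2*n+1)+1 by ring, tm_two_mul_add_one, tm_two_mul_add_one, neg_neg]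

lemma tm_pm (k : ℕ) : tm k = 1 ∨ tm k = -1 := by
  unfold tm
  rcases Nat.even_or_odd (binDigitSum k) with h | h
  · left; exact h.neg_one_pow
  · right; exact h.neg_one_pow

def Tsum (n : ℕ) : ℤ := ∑ l ∈ Finset.range n, tm l

lemma Tsum_succ' (k m : ℕ) (h : m = k + 1) : Tsum m = Tsum k + tm k := by
  subst h; exact Finset.sum_range_succ _ k

lemma Tsum_two_mul (m : ℕ) : Tsum (2*m) = 0 := by
  induction m with
  | zero => simp [Tsum]
  | succ m ih =>
    rw [Tsum_succ' (2*m+1) (2*(m+1)) (by ring), Tsum_succ' (2*m) (2*m+1) rfl, ih,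
      tm_two_mul, tm_two_mul_add_one]
    ring

lemma Tsum_bound (n : ℕ) : -1 ≤ Tsum n ∧ Tsum n ≤ 1 := by
  rcases Nat.even_or_odd n with ⟨m, hm⟩ | ⟨m, hm⟩
  · rw [show n = 2*m by omega, Tsum_two_mul]; omega
  · rw [show n = 2*m+1 by omega, Tsum_succ' (2*m) (2*m+1) rfl, Tsum_two_mul, tm_two_mul]
    rcases tm_pm m with h | h <;> omega

lemma rs_succ' (k m : ℕ) (h : m = k + 1) :
    rarefiedSum 3 0 m = rarefiedSum 3 0 k + if k % 3 = 0 then tm k else 0 := by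
  subst h
  unfold rarefiedSum
  rw [Finset.sum_filter, Finset.sum_filter, Finset.sum_range_succ]

lemma S_four (n : ℕ) : rarefiedSum 3 0 (4*n) = 3 * rarefiedSum 3 0 n - Tsum n := by
  induction n with
  | zero => simp [rarefiedSum, Tsum]
  | succ n ih =>
    rw [rs_succ' (4*n+3) (4*(n+1)) (by ring), rs_succ' (4*n+2) (4*n+3) (by ring),
      rs_succ' (4*n+1) (4*n+2) (by ring), rs_succ' (4*n) (4*n+1) (by ring),
      rs_succ' n (n+1) rfl, Tsum_succ' n (n+1) rfl, ih, tm_4n, tm_4n1, tm_4n2, tm_4n3]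
    rcases (by omega : n % 3 = 0 ∨ n % 3 = 1 ∨ n % 3 = 2) with h | h | h
    · rw [if_pos (by omega : (4*n) % 3 = 0), if_neg (by omega : ¬ (4*n+1) % 3 = 0),
        if_neg (by omega : ¬ (4*n+2) % 3 = 0), if_pos (by omega : (4*n+3) % 3 = 0),
        if_pos h]
      ring
    · rw [if_neg (by omega : ¬ (4*n) % 3 = 0), if_neg (by omega : ¬ (4*n+1) % 3 = 0),
        if_pos (by omega : (4*n+2) % 3 = 0), if_neg (by omega : ¬ (4*n+3) % 3 = 0),
        if_neg (by omega : ¬ n % 3 = 0)]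
      ring
    · rw [if_neg (by omega : ¬ (4*n) % 3 = 0), if_pos (by omega : (4*n+1) % 3 = 0),
        if_neg (by omega : ¬ (4*n+2) % 3 = 0), if_neg (by omega : ¬ (4*n+3) % 3 = 0),
        if_neg (by omega : ¬ n % 3 = 0)]
      ring

lemma S_close (n r : ℕ) (hr : r ≤ 3) :
    rarefiedSum 3 0 (4*n) - 1 ≤ rarefiedSum 3 0 (4*n+r) ∧
    rarefiedSum 3 0 (4*n+r) ≤ rarefiedSum 3 0 (4*n) + 1 := by
  interval_cases r
  · rw [Nat.add_zero]; omega
  · rw [rs_succ' (4*n) (4*n+1) rfl]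
    split_ifs with h
    · rcases tm_pm (4*n) with h1 | h1 <;> omega
    · omega
  · rw [rs_succ' (4*n+1) (4*n+2) (by ring), rs_succ' (4*n) (4*n+1) rfl]
    split_ifs with h1 h2 h2
    · omega
    · rcases tm_pm (4*n) with h | h <;> omega
    · rcases tm_pm (4*n+1) with h | h <;> omega
    · omega
  · rw [rs_succ' (4*n+2) (4*n+3) (by ring), rs_succ' (4*n+1) (4*n+2) (by ring), rs_succ' (4*n) (4*n+1) rfl]
    split_ifs with h1 h2 h3 h2 h3 h3 h3
    all_goals first
      | omega
      | (rcases tm_pm (4*n) with h | h <;> omega)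
      | (rcases tm_pm (4*n+1) with h | h <;> omega)
      | (rcases tm_pm (4*n+2) with h | h <;> omega)

lemma S_base_small : rarefiedSum 3 0 1 = 1 ∧ rarefiedSum 3 0 2 = 1 ∧ rarefiedSum 3 0 3 = 1 := by
  refine ⟨?_, ?_, ?_⟩ <;>
    norm_num [rarefiedSum, Finset.sum_filter, Finset.sum_range_succ, tm, binDigitSum]

lemma S_base (m : ℕ) (h1 : 4 ≤ m) (h2 : m ≤ 15) : 2 ≤ rarefiedSum 3 0 m := by
  interval_cases m <;>
    norm_num [rarefiedSum, Finset.sum_filter, Finset.sum_range_succ, tm, binDigitSum]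

section
variable {β : ℝ}

lemma beta_pos (hβ : β = Real.log 3 / Real.log 4) : 0 < β := by
  rw [hβ]; exact div_pos (Real.log_pos (by norm_num)) (Real.log_pos (by norm_num))

lemma beta_le_one (hβ : β = Real.log 3 / Real.log 4) : β ≤ 1 := by
  rw [hβ]
  rw [div_le_one (Real.log_pos (by norm_num))]
  exact Real.log_le_log (by norm_num) (by norm_num)

lemma four_rpow (hβ : β = Real.log 3 / Real.log 4) : (4:ℝ) ^ β = 3 := by
  rw [hβ, Real.rpow_def_of_pos (by norm_num : (0:ℝ) < 4)]
  have h4 : Real.log 4 ≠ 0 := ne_of_gt (Real.log_pos (by norm_num))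
  have : Real.log 4 * (Real.log 3 / Real.log 4) = Real.log 3 := by field_simp
  rw [this, Real.exp_log (by norm_num)]

lemma log3_le : Real.log 3 ≤ 8/5 * Real.log 2 := by
  have h1 : Real.log (3^5 : ℝ) ≤ Real.log (2^8 : ℝ) :=
    Real.log_le_log (by norm_num) (by norm_num)
  rw [Real.log_pow, Real.log_pow] at h1
  push_cast at h1
  linarith

lemma log5_ge : 16/7 * Real.log 2 ≤ Real.log 5 := by
  have h1 : Real.log (2^16 : ℝ) ≤ Real.log (5^7 : ℝ) :=
    Real.log_le_log (by norm_num) (by norm_num)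
  rw [Real.log_pow, Real.log_pow] at h1
  push_cast at h1
  linarith

lemma three_rpow_le (hβ : β = Real.log 3 / Real.log 4) : (3:ℝ) ^ β ≤ 5/2 := by
  have hl2 : 0 < Real.log 2 := Real.log_pos (by norm_num)
  have hl3 : 0 < Real.log 3 := Real.log_pos (by norm_num)
  have hlog4 : Real.log 4 = 2 * Real.log 2 := by
    rw [show (4:ℝ) = 2^2 by norm_num, Real.log_pow]; push_cast; ring
  have key : Real.log 3 * β ≤ Real.log (5/2) := by
    rw [hβ, hlog4, Real.log_div (by norm_num) (by norm_num)]
    rw [mul_div_assoc', div_le_iff₀ (by linarith)]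
    nlinarith [log3_le, log5_ge, sq_nonneg (Real.log 3 - 8/5 * Real.log 2)]
  calc (3:ℝ) ^ β = Real.exp (Real.log 3 * β) := Real.rpow_def_of_pos (by norm_num) β
    _ ≤ Real.exp (Real.log (5/2)) := Real.exp_le_exp.mpr key
    _ = 5/2 := Real.exp_log (by norm_num)

lemma C_ge_two (hβ : β = Real.log 3 / Real.log 4) : 2 ≤ 5 * (3:ℝ) ^ (-β) := by
  have h1 : (3:ℝ) ^ (-β) = ((3:ℝ)^β)⁻¹ := Real.rpow_neg (by norm_num) β
  have h2 : (0:ℝ) < (3:ℝ)^β := Real.rpow_pos_of_pos (by norm_num) β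
  have h3 := three_rpow_le hβ
  rw [h1]
  have h4 : ((5:ℝ)/2)⁻¹ ≤ ((3:ℝ)^β)⁻¹ := inv_anti₀ h2 h3
  norm_num at h4
  linarith

lemma three_rpow_neg_le_one (hβ : β = Real.log 3 / Real.log 4) : (3:ℝ) ^ (-β) ≤ 1 :=
  Real.rpow_le_one_of_one_le_of_nonpos (by norm_num) (by linarith [beta_pos hβ])

lemma three_rpow_neg_pos : (0:ℝ) < (3:ℝ) ^ (-β) := Real.rpow_pos_of_pos (by norm_num) _

lemma rpow_add_one_le (hβ : β = Real.log 3 / Real.log 4) (x : ℝ) (hx : 0 ≤ x) :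
    (x+1) ^ β ≤ x ^ β + 1 := by
  have h := NNReal.rpow_add_le_add_rpow (Real.toNNReal x) 1 (beta_pos hβ).le (beta_le_one hβ)
  have h2 := NNReal.coe_le_coe.2 h
  push_cast [NNReal.coe_rpow, Real.one_rpow] at h2
  rwa [Real.coe_toNNReal x hx] at h2

end

section
variable {β : ℝ}

lemma upper_bound (hβ : β = Real.log 3 / Real.log 4) : ∀ m : ℕ, 1 ≤ m →
    (rarefiedSum 3 0 m : ℝ) ≤ 5 * (3:ℝ)^(-β) * (m:ℝ)^β - 1 := by
  intro m
  induction m using Nat.strong_induction_on with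
  | _ m ih =>
    intro hm
    by_cases h4 : m < 4
    · have hm1 : (1:ℝ) ≤ (m:ℝ)^β := by
        rw [show (1:ℝ) = (1:ℝ)^β by rw [Real.one_rpow]]
        exact Real.rpow_le_rpow (by norm_num) (by exact_mod_cast hm) (beta_pos hβ).le
      have hC := C_ge_two hβ
      have hCpos : (0:ℝ) < 5 * (3:ℝ)^(-β) := by positivity
      have hS : rarefiedSum 3 0 m = 1 := by
        interval_cases m
        · exact S_base_small.1
        · exact S_base_small.2.1
        · exact S_base_small.2.2
      rw [hS]
      push_cast
      nlinarith
    · push_neg at h4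
      set n := m / 4 with hn
      have hn1 : 1 ≤ n := by omega
      have hnm : n < m := by omega
      have hrle : m % 4 ≤ 3 := by omega
      have hclose := (S_close n (m % 4) hrle).2
      rw [show 4*n + m % 4 = m by omega] at hclose
      have hS4 := S_four n
      have hT := (Tsum_bound n).1
      have hIH := ih n hnm hn1
      have hCpos : (0:ℝ) < 5 * (3:ℝ)^(-β) := by positivity
      have hint : rarefiedSum 3 0 m ≤ 3 * rarefiedSum 3 0 n - Tsum n + 1 := by omega
      have hc : (rarefiedSum 3 0 m : ℝ) ≤ 3 * (rarefiedSum 3 0 n : ℝ) - (Tsum n : ℝ) + 1 := by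
        exact_mod_cast hint
      have hT' : (-1:ℝ) ≤ (Tsum n : ℝ) := by exact_mod_cast hT
      have e1 : ((4*n:ℕ):ℝ) ^ β = 3 * (n:ℝ)^β := by
        push_cast
        rw [Real.mul_rpow (by norm_num) (by positivity), four_rpow hβ]
      have e2 : ((4*n:ℕ):ℝ) ^ β ≤ (m:ℝ)^β := by
        apply Real.rpow_le_rpow (by positivity) ?_ (beta_pos hβ).le
        exact_mod_cast Nat.cast_le.mpr (by omega : 4*n ≤ m)
      have k1 : 5 * (3:ℝ)^(-β) * (((4*n:ℕ):ℝ)^β) ≤ 5 * (3:ℝ)^(-β) * (m:ℝ)^β :=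
        mul_le_mul_of_nonneg_left e2 hCpos.le
      rw [e1] at k1
      nlinarith

lemma lower_bound (hβ : β = Real.log 3 / Real.log 4) : ∀ m : ℕ, 4 ≤ m →
    (3:ℝ)^(-β)/20 * (m:ℝ)^β + (1 + 3*((3:ℝ)^(-β)/20)/2) ≤ (rarefiedSum 3 0 m : ℝ) := by
  intro m
  induction m using Nat.strong_induction_on with
  | _ m ih =>
    intro hm
    have p2 : (3:ℝ)^(-β) ≤ 1 := three_rpow_neg_le_one hβ
    have p3 : (0:ℝ) < (3:ℝ)^(-β) := three_rpow_neg_pos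
    by_cases h16 : m < 16
    · have hS : (2:ℝ) ≤ (rarefiedSum 3 0 m : ℝ) := by
        exact_mod_cast S_base m hm (by omega)
      have p1 : (m:ℝ)^β ≤ 15 := by
        calc (m:ℝ)^β ≤ (m:ℝ)^(1:ℝ) :=
              Real.rpow_le_rpow_of_exponent_le (by exact_mod_cast (by omega : 1 ≤ m))
                (beta_le_one hβ)
          _ = (m:ℝ) := Real.rpow_one _
          _ ≤ 15 := by exact_mod_cast (by omega : m ≤ 15)
      have p4 : (0:ℝ) ≤ (m:ℝ)^β := by positivity
      nlinarith [mul_le_mul p2 p1 p4 (by norm_num : (0:ℝ) ≤ 1)]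
    · push_neg at h16
      set n := m / 4 with hn
      have hn4 : 4 ≤ n := by omega
      have hnm : n < m := by omega
      have hrle : m % 4 ≤ 3 := by omega
      have hclose := (S_close n (m % 4) hrle).1
      rw [show 4*n + m % 4 = m by omega] at hclose
      have hS4 := S_four n
      have hT := (Tsum_bound n).2
      have hIH := ih n hnm hn4
      have hint : 3 * rarefiedSum 3 0 n - 2 ≤ rarefiedSum 3 0 m := by omega
      have hc : 3 * (rarefiedSum 3 0 n : ℝ) - 2 ≤ (rarefiedSum 3 0 m : ℝ) := by
        exact_mod_cast hint
      have e1 : ((4*(n+1):ℕ):ℝ) ^ β = 3 * ((n:ℝ)+1)^β := by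
        push_cast
        rw [Real.mul_rpow (by norm_num) (by positivity), four_rpow hβ]
      have e2 : (m:ℝ)^β ≤ ((4*(n+1):ℕ):ℝ) ^ β := by
        apply Real.rpow_le_rpow (by positivity) ?_ (beta_pos hβ).le
        exact_mod_cast Nat.cast_le.mpr (by omega : m ≤ 4*(n+1))
      have e3 : ((n:ℝ)+1)^β ≤ (n:ℝ)^β + 1 :=
        rpow_add_one_le hβ (n:ℝ) (Nat.cast_nonneg n)
      have e4 : (m:ℝ)^β ≤ 3 * (n:ℝ)^β + 3 := by rw [e1] at e2; linarith
      have k1 : (3:ℝ)^(-β)/20 * (m:ℝ)^β ≤ (3:ℝ)^(-β)/20 * (3 * (n:ℝ)^β + 3) :=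
        mul_le_mul_of_nonneg_left e4 (by positivity)
      nlinarith

end

theorem stmt_15 (β : ℝ) (hβ : β = Real.log 3 / Real.log 4) :
    ∀ n : ℕ, 1 ≤ n →
      (3 : ℝ) ^ (-β) / 20 * (n : ℝ) ^ β < (rarefiedSum 3 0 n : ℝ) ∧
      (rarefiedSum 3 0 n : ℝ) < 5 * (3 : ℝ) ^ (-β) * (n : ℝ) ^ β := by
  intro n hn
  have p2 : (3:ℝ)^(-β) ≤ 1 := three_rpow_neg_le_one hβ
  have p3 : (0:ℝ) < (3:ℝ)^(-β) := three_rpow_neg_pos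
  constructor
  · by_cases h : n < 4
    · have hS : rarefiedSum 3 0 n = 1 := by
        interval_cases n
        · exact S_base_small.1
        · exact S_base_small.2.1
        · exact S_base_small.2.2
      have p1 : (n:ℝ)^β ≤ 3 := by
        calc (n:ℝ)^β ≤ (n:ℝ)^(1:ℝ) :=
              Real.rpow_le_rpow_of_exponent_le (by exact_mod_cast hn) (beta_le_one hβ)
          _ = (n:ℝ) := Real.rpow_one _
          _ ≤ 3 := by exact_mod_cast (by omega : n ≤ 3)
      have p4 : (0:ℝ) ≤ (n:ℝ)^β := by positivity
      rw [hS]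
      push_cast
      nlinarith [mul_le_mul p2 p1 p4 (by norm_num : (0:ℝ) ≤ 1)]
    · have h1 := lower_bound hβ n (by omega)
      nlinarith
  · have h1 := upper_bound hβ n hn
    have p4 : (0:ℝ) ≤ (n:ℝ)^β := by positivity
    linarith
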